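/- Auxiliary lemma, part (b): for every u in D(G) and every λ > 0, the Bochner integral W := ∫₀^∞ e^{−λt} Q(t) dt exists in C₀(E), belongs to D(G), and satisfies G W = ∫₀^∞ e^{−λt} G Q(t) dt = ∫₀^∞ e^{−λt} Q^G(t) dt, where Q^G is defined like Q but with Gu in place of u. -/

import Mathlib

/-! For fixed `t`, `v ↦ Q_v(t)` is linear, commutes with every `P_s` (semigroup property), and has
norm at most `1`: by the renewal identity `∫₀ᵗ ν̄(t-h) u^φ(h) dh = 1`, the weight `u^φ(h) ν̄(t-h)`
is a probability density on `(0, t)` and each inner integral has norm at most `ν̄(t-h) ‖v‖`.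
Hence `W v := ∫₀^∞ e^{-λt} Q_v(t) dt` is a bounded operator commuting with the `P_s`, so
`(P_s W u - W u)/s = W ((P_s u - u)/s) → W (Gu)`. -/

open MeasureTheory Set Filter Topology
open scoped ZeroAtInfty

/-- The candidate solution `Q(t) = E^x[u(M_{D_t})]` (for initial datum `u`); with `Gu` in
place of `u` this is the function `Q^G`. -/
noncomputable def cand {E : Type*} [TopologicalSpace E]
    (P : ℝ → C₀(E, ℝ) →L[ℝ] C₀(E, ℝ)) (ν : Measure ℝ) (uφ : ℝ → ℝ)
    (u : C₀(E, ℝ)) (t : ℝ) : C₀(E, ℝ) :=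
  if t = 0 then u
  else ∫ h in Set.Ioo 0 t, uφ h • (∫ r in Set.Ioi (t - h), P (r + h) u ∂ν)

section Semigroup

variable {F : Type*} [NormedAddCommGroup F] [NormedSpace ℝ F] {P : ℝ → F →L[ℝ] F}

lemma norm_semigroup_sub_le (hPsg : ∀ s t : ℝ, 0 ≤ s → 0 ≤ t → P (s + t) = (P s).comp (P t))
    (hPcon : ∀ t : ℝ, 0 ≤ t → ∀ f : F, ‖P t f‖ ≤ ‖f‖) (f : F) {s t : ℝ} (hs : 0 ≤ s)
    (hst : s ≤ t) : ‖P t f - P s f‖ ≤ ‖P (t - s) f - f‖ := by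
  have hsplit : P t f = P s (P (t - s) f) := by
    rw [← ContinuousLinearMap.comp_apply, ← hPsg s (t - s) hs (sub_nonneg.2 hst), add_sub_cancel]
  rw [hsplit, ← map_sub]
  exact hPcon s hs _

lemma continuousOn_semigroup_apply (hPsg : ∀ s t : ℝ, 0 ≤ s → 0 ≤ t → P (s + t) = (P s).comp (P t))
    (hPcon : ∀ t : ℝ, 0 ≤ t → ∀ f : F, ‖P t f‖ ≤ ‖f‖) {f : F}
    (hf : Tendsto (fun t => P t f) (𝓝[≥] 0) (𝓝 f)) : ContinuousOn (fun t => P t f) (Ici 0) := by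
  intro b hb
  rw [ContinuousWithinAt, tendsto_iff_norm_sub_tendsto_zero]
  have hdist : Tendsto (fun a => |a - b|) (𝓝[Ici 0] b) (𝓝[≥] 0) :=
    tendsto_nhdsWithin_iff.2 ⟨tendsto_nhdsWithin_of_tendsto_nhds
      ((continuous_id.sub continuous_const).abs.tendsto' b 0 (by simp)),
      Eventually.of_forall fun a => mem_Ici.2 (abs_nonneg (a - b))⟩
  refine squeeze_zero' (Eventually.of_forall fun _ => norm_nonneg _) ?_
    ((tendsto_iff_norm_sub_tendsto_zero.1 hf).comp hdist)
  filter_upwards [self_mem_nhdsWithin] with a ha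
  rcases le_total b a with hba | hab
  · rw [Function.comp_apply, abs_of_nonneg (sub_nonneg.2 hba)]
    exact norm_semigroup_sub_le hPsg hPcon f hb hba
  · rw [Function.comp_apply, abs_of_nonpos (sub_nonpos.2 hab), neg_sub, norm_sub_rev]
    exact norm_semigroup_sub_le hPsg hPcon f ha hab

lemma semigroup_apply_comm (hPsg : ∀ s t : ℝ, 0 ≤ s → 0 ≤ t → P (s + t) = (P s).comp (P t))
    (f : F) {s t : ℝ} (hs : 0 ≤ s) (ht : 0 ≤ t) : P s (P t f) = P t (P s f) := by
  rw [← ContinuousLinearMap.comp_apply, ← hPsg s t hs ht, add_comm, hPsg t s ht hs,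
    ContinuousLinearMap.comp_apply]

end Semigroup

section LevyMeasure

variable {ν : Measure ℝ}

lemma measure_Ioi_lt_top_of_lintegral_min_one_ne_top
    (hν1 : ∫⁻ s in Ioi (0 : ℝ), ENNReal.ofReal (min 1 s) ∂ν ≠ ⊤) {s : ℝ} (hs : 0 < s) :
    ν (Ioi s) < ⊤ := by
  refine ENNReal.lt_top_of_mul_ne_top_right (ne_top_of_le_ne_top hν1 ?_)
    (by simp [hs] : ENNReal.ofReal (min 1 s) ≠ 0)
  calc ENNReal.ofReal (min 1 s) * ν (Ioi s) = ∫⁻ _ in Ioi s, ENNReal.ofReal (min 1 s) ∂ν :=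
        (setLIntegral_const _ _).symm
    _ ≤ ∫⁻ r in Ioi s, ENNReal.ofReal (min 1 r) ∂ν :=
        setLIntegral_mono (by fun_prop) fun r hr =>
          ENNReal.ofReal_le_ofReal (min_le_min_left 1 (le_of_lt hr))
    _ ≤ ∫⁻ r in Ioi 0, ENNReal.ofReal (min 1 r) ∂ν := lintegral_mono_set (Ioi_subset_Ioi hs.le)

lemma sigmaFinite_restrict_Ioi_zero (hν : ∀ s, 0 < s → ν (Ioi s) < ⊤) :
    SigmaFinite (ν.restrict (Ioi 0)) := by
  refine Measure.sigmaFinite_of_countable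
    (S := insert (Iic 0) (range fun n : ℕ => Ioi ((n : ℝ) + 1)⁻¹))
    ((countable_range _).insert _) ?_ ?_
  · rintro _ (rfl | ⟨n, rfl⟩)
    · simp [Measure.restrict_apply measurableSet_Iic, Iic_inter_Ioi]
    · exact (Measure.restrict_apply_le _ _).trans_lt (hν _ (by positivity))
  · refine eq_univ_of_forall fun x => ?_
    rcases le_or_gt x 0 with hx | hx
    · exact ⟨_, mem_insert _ _, hx⟩
    · obtain ⟨n, hn⟩ := exists_nat_one_div_lt hx
      exact ⟨_, mem_insert_of_mem _ ⟨n, rfl⟩, by simpa using hn⟩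

end LevyMeasure

lemma StronglyMeasurable.setIntegral_prodMk_preimage {α β G : Type*} [MeasurableSpace α]
    [MeasurableSpace β] [NormedAddCommGroup G] [NormedSpace ℝ G] {μ : Measure β} [SFinite μ]
    {S : Set (α × β)} (hS : MeasurableSet S) {f : α × β → G} (hf : StronglyMeasurable f) :
    StronglyMeasurable fun x => ∫ y in Prod.mk x ⁻¹' S, f (x, y) ∂μ := by
  convert (hf.indicator hS).integral_prod_right' (ν := μ) using 1
  ext x
  rw [← integral_indicator (hS.preimage measurable_prodMk_left)]
  rfl

section Cand

variable {E : Type*} [TopologicalSpace E] {P : ℝ → C₀(E, ℝ) →L[ℝ] C₀(E, ℝ)} {ν : Measure ℝ}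
  {uφ : ℝ → ℝ} {v w : C₀(E, ℝ)} {s t l : ℝ}

lemma integrableOn_Ioi_semigroup_apply_add (hPcon : ∀ t : ℝ, 0 ≤ t → ∀ f, ‖P t f‖ ≤ ‖f‖)
    (hν : ∀ s, 0 < s → ν (Ioi s) < ⊤) (hc : ContinuousOn (fun s => P s v) (Ici 0)) (hs : 0 < s)
    {h : ℝ} (hh : 0 ≤ h) : IntegrableOn (fun r => P (r + h) v) (Ioi s) ν := by
  have hpos : ∀ r ∈ Ioi s, 0 ≤ r + h := fun r hr => by linarith [mem_Ioi.1 hr]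
  exact ⟨(hc.comp (by fun_prop) (fun r hr => mem_Ici.2 (hpos r hr))).aestronglyMeasurable
      measurableSet_Ioi,
    .restrict_of_bounded (C := ‖v‖) (hν s hs) (ae_restrict_of_forall_mem measurableSet_Ioi
      fun r hr => hPcon _ (hpos r hr) v)⟩

lemma exists_stronglyMeasurable_eq_setIntegral_Ioi (hν : ∀ s, 0 < s → ν (Ioi s) < ⊤)
    (hc : ContinuousOn (fun s => P s v) (Ici 0)) :
    ∃ G : ℝ × ℝ → C₀(E, ℝ), StronglyMeasurable G ∧
      ∀ t h, 0 ≤ h → h ≤ t → G (t, h) = ∫ r in Ioi (t - h), P (r + h) v ∂ν := by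
  -- `ν` may fail to be s-finite on `(-∞, 0]`, and `P` is only continuous on `[0, ∞)`: restrict the
  -- former and extend the latter by `P 0` to get a jointly measurable integrand.
  have := sigmaFinite_restrict_Ioi_zero hν
  have hP : Continuous fun s => P (max s 0) v :=
    hc.comp_continuous (by fun_prop) fun s => le_max_right s 0
  refine ⟨fun p => ∫ r in Ioi (p.1 - p.2), P (max (r + p.2) 0) v ∂ν.restrict (Ioi 0),
    StronglyMeasurable.setIntegral_prodMk_preimage
      (f := fun q : (ℝ × ℝ) × ℝ => P (max (q.2 + q.1.2) 0) v)
      (measurableSet_lt (f := fun q : (ℝ × ℝ) × ℝ => q.1.1 - q.1.2) (by fun_prop)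
        measurable_snd) (hP.comp (by fun_prop)).stronglyMeasurable,
    fun t h hh hht => ?_⟩
  dsimp only
  rw [Measure.restrict_restrict_of_subset (Ioi_subset_Ioi (sub_nonneg.2 hht))]
  exact setIntegral_congr_fun measurableSet_Ioi fun r hr => by
    rw [max_eq_left (by linarith [mem_Ioi.1 hr])]

lemma lintegral_enorm_smul_setIntegral_Ioi_le (hPcon : ∀ t : ℝ, 0 ≤ t → ∀ f, ‖P t f‖ ≤ ‖f‖)
    (huφ0 : ∀ t : ℝ, 0 < t → 0 ≤ uφ t)
    (hrenew : ∀ t : ℝ, 0 < t →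
      ∫⁻ h in Ioo 0 t, ν (Ioi (t - h)) * ENNReal.ofReal (uφ h) = 1)
    (v : C₀(E, ℝ)) (ht : 0 < t) :
    ∫⁻ h in Ioo 0 t, ‖uφ h • ∫ r in Ioi (t - h), P (r + h) v ∂ν‖ₑ ≤ ‖v‖ₑ := by
  calc _ ≤ ∫⁻ h in Ioo 0 t, ν (Ioi (t - h)) * ENNReal.ofReal (uφ h) * ‖v‖ₑ := by
        refine setLIntegral_mono' measurableSet_Ioo fun h hh => ?_
        rw [enorm_smul, Real.enorm_eq_ofReal (huφ0 h hh.1), mul_comm (ν _), mul_assoc]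
        gcongr
        calc ‖∫ r in Ioi (t - h), P (r + h) v ∂ν‖ₑ ≤ ∫⁻ r in Ioi (t - h), ‖P (r + h) v‖ₑ ∂ν :=
              enorm_integral_le_lintegral_enorm _
          _ ≤ ∫⁻ _ in Ioi (t - h), ‖v‖ₑ ∂ν :=
              setLIntegral_mono' measurableSet_Ioi fun r hr => enorm_le_iff_norm_le.2
                (hPcon _ (by linarith [mem_Ioi.1 hr, hh.2]) v)
          _ = ν (Ioi (t - h)) * ‖v‖ₑ := by rw [setLIntegral_const, mul_comm]
    _ = ‖v‖ₑ := by rw [lintegral_mul_const' _ _ enorm_ne_top, hrenew t ht, one_mul]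

lemma integrableOn_smul_setIntegral_Ioi (hPcon : ∀ t : ℝ, 0 ≤ t → ∀ f, ‖P t f‖ ≤ ‖f‖)
    (hν : ∀ s, 0 < s → ν (Ioi s) < ⊤) (huφm : Measurable uφ)
    (huφ0 : ∀ t : ℝ, 0 < t → 0 ≤ uφ t)
    (hrenew : ∀ t : ℝ, 0 < t →
      ∫⁻ h in Ioo 0 t, ν (Ioi (t - h)) * ENNReal.ofReal (uφ h) = 1)
    (hc : ContinuousOn (fun s => P s v) (Ici 0)) (ht : 0 < t) :
    IntegrableOn (fun h => uφ h • ∫ r in Ioi (t - h), P (r + h) v ∂ν) (Ioo 0 t) := by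
  obtain ⟨G, hGm, hG⟩ := exists_stronglyMeasurable_eq_setIntegral_Ioi hν hc
  refine ⟨?_, (lintegral_enorm_smul_setIntegral_Ioi_le hPcon huφ0 hrenew v ht).trans_lt
    enorm_lt_top⟩
  refine (huφm.stronglyMeasurable.smul
    (hGm.comp_measurable (measurable_prodMk_left (x := t)))).aestronglyMeasurable.congr ?_
  filter_upwards [ae_restrict_mem measurableSet_Ioo] with h hh
  change uφ h • G (t, h) = _
  rw [hG t h hh.1.le hh.2.le]

lemma norm_cand_le (hPcon : ∀ t : ℝ, 0 ≤ t → ∀ f, ‖P t f‖ ≤ ‖f‖)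
    (huφ0 : ∀ t : ℝ, 0 < t → 0 ≤ uφ t)
    (hrenew : ∀ t : ℝ, 0 < t →
      ∫⁻ h in Ioo 0 t, ν (Ioi (t - h)) * ENNReal.ofReal (uφ h) = 1)
    (v : C₀(E, ℝ)) (t : ℝ) : ‖cand P ν uφ v t‖ ≤ ‖v‖ := by
  rw [cand]
  split_ifs with h0
  · exact le_rfl
  rcases le_or_gt t 0 with ht | ht
  · simp [Ioo_eq_empty ht.not_gt]
  exact enorm_le_iff_norm_le.1 <| (enorm_integral_le_lintegral_enorm _).trans
    (lintegral_enorm_smul_setIntegral_Ioi_le hPcon huφ0 hrenew v ht)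

lemma aestronglyMeasurable_cand (hν : ∀ s, 0 < s → ν (Ioi s) < ⊤) (huφm : Measurable uφ)
    (hc : ContinuousOn (fun s => P s v) (Ici 0)) :
    AEStronglyMeasurable (cand P ν uφ v) (volume.restrict (Ioi 0)) := by
  obtain ⟨G, hGm, hG⟩ := exists_stronglyMeasurable_eq_setIntegral_Ioi hν hc
  have hm := StronglyMeasurable.setIntegral_prodMk_preimage (μ := volume)
    (f := fun p : ℝ × ℝ => uφ p.2 • G p)
    ((measurableSet_lt (measurable_const (a := (0 : ℝ))) measurable_snd).inter
      (measurableSet_lt measurable_snd measurable_fst))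
    ((huφm.comp measurable_snd).stronglyMeasurable.smul hGm)
  refine hm.aestronglyMeasurable.congr ?_
  filter_upwards [ae_restrict_mem measurableSet_Ioi] with t ht
  rw [cand, if_neg ht.ne']
  exact setIntegral_congr_fun measurableSet_Ioo fun h hh => by
    rw [hG t h hh.1.le hh.2.le]

@[simp]
lemma cand_zero : cand P ν uφ v 0 = v := if_pos rfl

lemma cand_of_neg (ht : t < 0) : cand P ν uφ v t = 0 := by
  simp [cand, ht.ne, Ioo_eq_empty ht.le.not_gt]

lemma cand_of_pos (ht : 0 < t) :
    cand P ν uφ v t = ∫ h in Ioo 0 t, uφ h • ∫ r in Ioi (t - h), P (r + h) v ∂ν :=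
  if_neg ht.ne'

lemma cand_smul (c : ℝ) (v : C₀(E, ℝ)) (t : ℝ) :
    cand P ν uφ (c • v) t = c • cand P ν uφ v t := by
  rcases lt_trichotomy t 0 with ht | rfl | ht
  · simp [cand_of_neg ht]
  · simp
  rw [cand_of_pos ht, cand_of_pos ht, ← integral_smul]
  refine setIntegral_congr_fun measurableSet_Ioo fun h _ => ?_
  simp only [map_smul, integral_smul]
  exact smul_comm _ _ _

lemma cand_add (hPcon : ∀ t : ℝ, 0 ≤ t → ∀ f, ‖P t f‖ ≤ ‖f‖)
    (hν : ∀ s, 0 < s → ν (Ioi s) < ⊤) (huφm : Measurable uφ)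
    (huφ0 : ∀ t : ℝ, 0 < t → 0 ≤ uφ t)
    (hrenew : ∀ t : ℝ, 0 < t →
      ∫⁻ h in Ioo 0 t, ν (Ioi (t - h)) * ENNReal.ofReal (uφ h) = 1)
    (hv : ContinuousOn (fun s => P s v) (Ici 0)) (hw : ContinuousOn (fun s => P s w) (Ici 0))
    (t : ℝ) : cand P ν uφ (v + w) t = cand P ν uφ v t + cand P ν uφ w t := by
  rcases lt_trichotomy t 0 with ht | rfl | ht
  · simp [cand_of_neg ht]
  · simp
  rw [cand_of_pos ht, cand_of_pos ht, cand_of_pos ht,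
    ← integral_add (integrableOn_smul_setIntegral_Ioi hPcon hν huφm huφ0 hrenew hv ht)
      (integrableOn_smul_setIntegral_Ioi hPcon hν huφm huφ0 hrenew hw ht)]
  refine setIntegral_congr_fun measurableSet_Ioo fun h hh => ?_
  have hth : 0 < t - h := sub_pos.2 hh.2
  simp only [map_add, integral_add (integrableOn_Ioi_semigroup_apply_add hPcon hν hv hth hh.1.le)
    (integrableOn_Ioi_semigroup_apply_add hPcon hν hw hth hh.1.le)]
  exact smul_add (M := ℝ) (A := C₀(E, ℝ)) _ _ _

lemma semigroup_apply_cand (hPsg : ∀ s t : ℝ, 0 ≤ s → 0 ≤ t → P (s + t) = (P s).comp (P t))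
    (hPcon : ∀ t : ℝ, 0 ≤ t → ∀ f, ‖P t f‖ ≤ ‖f‖)
    (hν : ∀ s, 0 < s → ν (Ioi s) < ⊤) (huφm : Measurable uφ)
    (huφ0 : ∀ t : ℝ, 0 < t → 0 ≤ uφ t)
    (hrenew : ∀ t : ℝ, 0 < t →
      ∫⁻ h in Ioo 0 t, ν (Ioi (t - h)) * ENNReal.ofReal (uφ h) = 1)
    (hv : ContinuousOn (fun s => P s v) (Ici 0)) (hs : 0 ≤ s) (t : ℝ) :
    P s (cand P ν uφ v t) = cand P ν uφ (P s v) t := by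
  rcases lt_trichotomy t 0 with ht | rfl | ht
  · simp [cand_of_neg ht]
  · simp
  rw [cand_of_pos ht, cand_of_pos ht, ← (P s).integral_comp_comm
    (integrableOn_smul_setIntegral_Ioi hPcon hν huφm huφ0 hrenew hv ht)]
  refine setIntegral_congr_fun measurableSet_Ioo fun h hh => ?_
  rw [map_smul, ← (P s).integral_comp_comm
    (integrableOn_Ioi_semigroup_apply_add hPcon hν hv (sub_pos.2 hh.2) hh.1.le)]
  refine congrArg _ (setIntegral_congr_fun measurableSet_Ioi fun r hr => ?_)
  exact semigroup_apply_comm hPsg v hs (by linarith [mem_Ioi.1 hr, hh.2])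

lemma norm_exp_smul_cand_le (hPcon : ∀ t : ℝ, 0 ≤ t → ∀ f, ‖P t f‖ ≤ ‖f‖)
    (huφ0 : ∀ t : ℝ, 0 < t → 0 ≤ uφ t)
    (hrenew : ∀ t : ℝ, 0 < t →
      ∫⁻ h in Ioo 0 t, ν (Ioi (t - h)) * ENNReal.ofReal (uφ h) = 1)
    (v : C₀(E, ℝ)) (l t : ℝ) :
    ‖Real.exp (-(l * t)) • cand P ν uφ v t‖ ≤ Real.exp (-l * t) * ‖v‖ := by
  rw [norm_smul, Real.norm_of_nonneg (Real.exp_pos _).le, neg_mul]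
  exact mul_le_mul_of_nonneg_left (norm_cand_le hPcon huφ0 hrenew v t) (Real.exp_pos _).le

lemma integrableOn_exp_smul_cand (hPcon : ∀ t : ℝ, 0 ≤ t → ∀ f, ‖P t f‖ ≤ ‖f‖)
    (hν : ∀ s, 0 < s → ν (Ioi s) < ⊤) (huφm : Measurable uφ)
    (huφ0 : ∀ t : ℝ, 0 < t → 0 ≤ uφ t)
    (hrenew : ∀ t : ℝ, 0 < t →
      ∫⁻ h in Ioo 0 t, ν (Ioi (t - h)) * ENNReal.ofReal (uφ h) = 1)
    (hv : ContinuousOn (fun s => P s v) (Ici 0)) (hl : 0 < l) :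
    IntegrableOn (fun t => Real.exp (-(l * t)) • cand P ν uφ v t) (Ioi 0) :=
  Integrable.mono' ((exp_neg_integrableOn_Ioi 0 hl).mul_const ‖v‖)
    ((by fun_prop : Continuous fun t : ℝ => Real.exp (-(l * t))).aestronglyMeasurable.smul
      (aestronglyMeasurable_cand hν huφm hv))
    (Eventually.of_forall (norm_exp_smul_cand_le hPcon huφ0 hrenew v l))

lemma exists_continuousLinearMap_eq_integral_exp_smul_cand
    (hPcon : ∀ t : ℝ, 0 ≤ t → ∀ f, ‖P t f‖ ≤ ‖f‖)
    (hν : ∀ s, 0 < s → ν (Ioi s) < ⊤) (huφm : Measurable uφ)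
    (huφ0 : ∀ t : ℝ, 0 < t → 0 ≤ uφ t)
    (hrenew : ∀ t : ℝ, 0 < t →
      ∫⁻ h in Ioo 0 t, ν (Ioi (t - h)) * ENNReal.ofReal (uφ h) = 1)
    (hc : ∀ f, ContinuousOn (fun s => P s f) (Ici 0)) (hl : 0 < l) :
    ∃ W : C₀(E, ℝ) →L[ℝ] C₀(E, ℝ),
      ∀ v, W v = ∫ t in Ioi 0, Real.exp (-(l * t)) • cand P ν uφ v t := by
  have hint := fun v => integrableOn_exp_smul_cand hPcon hν huφm huφ0 hrenew (hc v) hl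
  let W : C₀(E, ℝ) →ₗ[ℝ] C₀(E, ℝ) :=
    { toFun := fun v => ∫ t in Ioi 0, Real.exp (-(l * t)) • cand P ν uφ v t
      map_add' := fun v w => by
        rw [← integral_add (hint v) (hint w)]
        refine integral_congr_ae (Eventually.of_forall fun t => ?_)
        dsimp only
        rw [cand_add hPcon hν huφm huφ0 hrenew (hc v) (hc w)]
        exact smul_add (M := ℝ) (A := C₀(E, ℝ)) _ _ _
      map_smul' := fun c v => by
        simp only [cand_smul, smul_comm _ c, integral_smul, RingHom.id_apply] }
  refine ⟨W.mkContinuous (∫ t in Ioi 0, Real.exp (-l * t)) fun v => ?_, fun v => rfl⟩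
  rw [← integral_mul_const]
  exact norm_integral_le_of_norm_le ((exp_neg_integrableOn_Ioi 0 hl).mul_const ‖v‖)
    (Eventually.of_forall (norm_exp_smul_cand_le hPcon huφ0 hrenew v l))

end Cand

theorem ctrw_overshoot_aux_b_general
    {E : Type*} [MetricSpace E]
    (P : ℝ → C₀(E, ℝ) →L[ℝ] C₀(E, ℝ))
    (hPsg : ∀ s t : ℝ, 0 ≤ s → 0 ≤ t → P (s + t) = (P s).comp (P t))
    (hPcon : ∀ t : ℝ, 0 ≤ t → ∀ f : C₀(E, ℝ), ‖P t f‖ ≤ ‖f‖)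
    (hPsc : ∀ f : C₀(E, ℝ), Tendsto (fun t => P t f) (𝓝[≥] (0 : ℝ)) (𝓝 f))
    (ν : Measure ℝ)
    (hν1 : ∫⁻ s in Set.Ioi (0 : ℝ), ENNReal.ofReal (min 1 s) ∂ν ≠ ⊤)
    (uφ : ℝ → ℝ) (huφm : Measurable uφ)
    (huφ0 : ∀ t : ℝ, 0 < t → 0 ≤ uφ t)
    (hrenew : ∀ t : ℝ, 0 < t →
      ∫⁻ h in Set.Ioo 0 t, ν (Set.Ioi (t - h)) * ENNReal.ofReal (uφ h) = 1)
    (u Gu : C₀(E, ℝ))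
    (hu : Tendsto (fun h : ℝ => h⁻¹ • (P h u - u)) (𝓝[>] (0 : ℝ)) (𝓝 Gu)) :
    ∀ l : ℝ, 0 < l →
      IntegrableOn (fun t : ℝ => Real.exp (-(l * t)) • cand P ν uφ u t)
        (Set.Ioi 0) volume ∧
      IntegrableOn (fun t : ℝ => Real.exp (-(l * t)) • cand P ν uφ Gu t)
        (Set.Ioi 0) volume ∧
      Tendsto
        (fun h : ℝ => h⁻¹ •
          (P h (∫ t in Set.Ioi (0 : ℝ), Real.exp (-(l * t)) • cand P ν uφ u t) -
            ∫ t in Set.Ioi (0 : ℝ), Real.exp (-(l * t)) • cand P ν uφ u t))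
        (𝓝[>] (0 : ℝ))
        (𝓝 (∫ t in Set.Ioi (0 : ℝ), Real.exp (-(l * t)) • cand P ν uφ Gu t)) := by
  intro l hl
  have hν : ∀ s, 0 < s → ν (Ioi s) < ⊤ := fun s =>
    measure_Ioi_lt_top_of_lintegral_min_one_ne_top hν1
  have hc : ∀ f, ContinuousOn (fun s => P s f) (Ici 0) := fun f =>
    continuousOn_semigroup_apply hPsg hPcon (hPsc f)
  have hint := fun v => integrableOn_exp_smul_cand hPcon hν huφm huφ0 hrenew (hc v) hl
  obtain ⟨W, hW⟩ :=
    exists_continuousLinearMap_eq_integral_exp_smul_cand hPcon hν huφm huφ0 hrenew hc hl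
  have hcomm : ∀ s, 0 ≤ s → P s (W u) = W (P s u) := fun s hs => by
    simp only [hW, ← (P s).integral_comp_comm (hint u), map_smul,
      semigroup_apply_cand hPsg hPcon hν huφm huφ0 hrenew (hc u) hs]
  refine ⟨hint u, hint Gu, ?_⟩
  simp only [← hW]
  refine ((W.continuous.tendsto Gu).comp hu).congr' ?_
  filter_upwards [self_mem_nhdsWithin] with s hs
  simp [hcomm s (le_of_lt hs)]

/-- Auxiliary lemma, part (b): for every `u ∈ D(G)` and `λ > 0`, the Laplace transform
`W = ∫₀^∞ e^{-λt} Q(t) dt` exists as a Bochner integral in `C₀(E)`, belongs to `D(G)`,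
and `G W = ∫₀^∞ e^{-λt} G Q(t) dt = ∫₀^∞ e^{-λt} Q^G(t) dt`. -/
theorem ctrw_overshoot_aux_b
    {E : Type*} [MetricSpace E] [TopologicalSpace.SeparableSpace E] [LocallyCompactSpace E]
    (P : ℝ → C₀(E, ℝ) →L[ℝ] C₀(E, ℝ))
    (hP0 : P 0 = ContinuousLinearMap.id ℝ C₀(E, ℝ))
    (hPsg : ∀ s t : ℝ, 0 ≤ s → 0 ≤ t → P (s + t) = (P s).comp (P t))
    (hPpos : ∀ t : ℝ, 0 ≤ t → ∀ f : C₀(E, ℝ), (∀ x, 0 ≤ f x) → ∀ x, 0 ≤ P t f x)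
    (hPcon : ∀ t : ℝ, 0 ≤ t → ∀ f : C₀(E, ℝ), ‖P t f‖ ≤ ‖f‖)
    (hPsc : ∀ f : C₀(E, ℝ), Tendsto (fun t => P t f) (𝓝[≥] (0 : ℝ)) (𝓝 f))
    (ν : Measure ℝ)
    (hν1 : ∫⁻ s in Set.Ioi (0 : ℝ), ENNReal.ofReal (min 1 s) ∂ν ≠ ⊤)
    (hνinf : ν (Set.Ioi (0 : ℝ)) = ⊤)
    (hνpos : ∀ t : ℝ, 0 < t → 0 < ν (Set.Ioi t))
    (uφ : ℝ → ℝ) (huφm : Measurable uφ)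
    (huφ0 : ∀ t : ℝ, 0 < t → 0 ≤ uφ t)
    (huφmono : ∀ s t : ℝ, 0 < s → s ≤ t → uφ t ≤ uφ s)
    (hrenew : ∀ t : ℝ, 0 < t →
      ∫⁻ h in Set.Ioo 0 t, ν (Set.Ioi (t - h)) * ENNReal.ofReal (uφ h) = 1)
    (hlog : ∫⁻ t in Set.Ioo (0 : ℝ) 1, ENNReal.ofReal (|Real.log t| * uφ t) ≠ ⊤)
    (u Gu : C₀(E, ℝ))
    (hu : Tendsto (fun h : ℝ => h⁻¹ • (P h u - u)) (𝓝[>] (0 : ℝ)) (𝓝 Gu)) :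
    ∀ l : ℝ, 0 < l →
      IntegrableOn (fun t : ℝ => Real.exp (-(l * t)) • cand P ν uφ u t)
        (Set.Ioi 0) volume ∧
      IntegrableOn (fun t : ℝ => Real.exp (-(l * t)) • cand P ν uφ Gu t)
        (Set.Ioi 0) volume ∧
      Tendsto
        (fun h : ℝ => h⁻¹ •
          (P h (∫ t in Set.Ioi (0 : ℝ), Real.exp (-(l * t)) • cand P ν uφ u t) -
            ∫ t in Set.Ioi (0 : ℝ), Real.exp (-(l * t)) • cand P ν uφ u t))
        (𝓝[>] (0 : ℝ))
        (𝓝 (∫ t in Set.Ioi (0 : ℝ), Real.exp (-(l * t)) • cand P ν uφ Gu t)) :=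
  ctrw_overshoot_aux_b_general P hPsg hPcon hPsc ν hν1 uφ huφm huφ0 hrenew u Gu hu
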